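/- Let x₁,...,x_n be nonnegative reals and L_k = x₁ + ⋯ + x_k. If a processor is chosen greedily as the least loaded among m processors when assigning each item in order, then just after item i is assigned, the load of its processor is at most L_{i-1}/m + x_i ≤ (2 - 1/m)·max(L_i/m, x_i). -/

import Mathlib

/-- Load of machine `j` just before item `i` is assigned. -/
def loadBefore {n m : ℕ} (x : Fin n → ℝ) (a : Fin n → Fin m) (i : Fin n) (j : Fin m) : ℝ :=
  ∑ k ∈ Finset.univ.filter (fun k : Fin n => k < i ∧ a k = j), x k

/-- Total size of the first `i` items. -/
def prefixLoad {n : ℕ} (x : Fin n → ℝ) (i : ℕ) : ℝ :=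
  ∑ k ∈ Finset.univ.filter (fun k : Fin n => (k : ℕ) < i), x k

/-! Greedy assignment puts item `i` on a least loaded machine, whose load is at most the
average `L_{i-1}/m`. Then `L_{i-1}/m + x_i = L_i/m + (1 - 1/m) x_i`, and each of the two
summands is bounded by the corresponding multiple of `max (L_i/m) x_i`. -/

open Finset

lemma div_add_le_two_sub_inv_mul_max {K : Type*} [Field K] [LinearOrder K]
    [IsStrictOrderedRing K] {m : K} (hm : 1 ≤ m) (L y : K) :
    L / m + y ≤ (2 - 1 / m) * max ((L + y) / m) y := by
  have hm0 : 0 < m := zero_lt_one.trans_le hm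
  have hcoef : 0 ≤ 1 - 1 / m := sub_nonneg.2 ((div_le_one hm0).2 hm)
  calc L / m + y = (L + y) / m + (1 - 1 / m) * y := by field_simp; ring
    _ ≤ max ((L + y) / m) y + (1 - 1 / m) * max ((L + y) / m) y := by
      gcongr
      exacts [le_max_left _ _, le_max_right _ _]
    _ = (2 - 1 / m) * max ((L + y) / m) y := by ring

section Greedy

variable {n m : ℕ} (x : Fin n → ℝ)

lemma prefixLoad_eq_sum_Iio (i : Fin n) : prefixLoad x i = ∑ k ∈ Iio i, x k := by
  unfold prefixLoad
  congr 1
  ext k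
  simp

lemma prefixLoad_succ (i : Fin n) : prefixLoad x (i + 1) = prefixLoad x i + x i := by
  have hIic : univ.filter (fun k : Fin n => (k : ℕ) < i + 1) = Iic i := by
    ext k
    simp
  rw [prefixLoad, hIic, prefixLoad_eq_sum_Iio, sum_Iio_add_eq_sum_Iic]

lemma sum_loadBefore (a : Fin n → Fin m) (i : Fin n) :
    ∑ j, loadBefore x a i j = prefixLoad x i := by
  rw [prefixLoad_eq_sum_Iio, ← sum_fiberwise (Iio i) a x]
  refine sum_congr rfl fun j _ => ?_
  unfold loadBefore
  congr 1
  ext k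
  simp

lemma loadBefore_le_prefixLoad_div {a : Fin n → Fin m} {i : Fin n}
    (hmin : ∀ j, loadBefore x a i (a i) ≤ loadBefore x a i j) :
    loadBefore x a i (a i) ≤ prefixLoad x i / m := by
  have hm : (0 : ℝ) < m := by exact_mod_cast (a i).pos
  rw [le_div_iff₀' hm, ← sum_loadBefore]
  simpa using card_nsmul_le_sum univ (loadBefore x a i) _ fun j _ => hmin j

end Greedy

theorem greedy_load_bound_general (n m : ℕ) (x : Fin n → ℝ)
    (a : Fin n → Fin m)
    (hgreedy : ∀ i j, loadBefore x a i (a i) ≤ loadBefore x a i j) :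
    ∀ i : Fin n,
      loadBefore x a i (a i) + x i ≤ prefixLoad x i / m + x i ∧
      prefixLoad x i / m + x i ≤
        (2 - 1 / m) * max (prefixLoad x (i + 1) / m) (x i) := by
  intro i
  have hm : (1 : ℝ) ≤ m := by exact_mod_cast (a i).pos
  refine ⟨add_le_add_left (loadBefore_le_prefixLoad_div x (hgreedy i)) _, ?_⟩
  rw [prefixLoad_succ]
  exact div_add_le_two_sub_inv_mul_max hm _ _

theorem greedy_load_bound (n m : ℕ) (hm : 1 ≤ m) (x : Fin n → ℝ)
    (hx : ∀ k, 0 ≤ x k) (a : Fin n → Fin m)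
    (hgreedy : ∀ i j, loadBefore x a i (a i) ≤ loadBefore x a i j) :
    ∀ i : Fin n,
      loadBefore x a i (a i) + x i ≤ prefixLoad x i / m + x i ∧
      prefixLoad x i / m + x i ≤
        (2 - 1 / m) * max (prefixLoad x (i + 1) / m) (x i) :=
  greedy_load_bound_general n m x a hgreedy
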